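/- arXiv:1509.00112 — 2 statements merged into one kernel-verified Lean document; each statement's English description precedes it below -/
import Mathlib

section
/- In the polynomial ring ℤ[X_1,...,X_{k+1}, e_1,...,e_n] with the specialization e_j ↦ e_j(X_1,...,X_n) of elementary symmetric polynomials (for n ≥ k+1 variables containing X_1,...,X_{k+1} among X_1,...,X_n), the identity h_{n-k} - e_1·h_{n-k-1} + e_2·h_{n-k-2} - ... + (-1)^{n-k} e_{n-k} = 0 holds, where h_j = h_j(X_1,...,X_{k+1}) is the complete homogeneous symmetric polynomial of degree j in X_1,...,X_{k+1} and e_i = e_i(X_1,...,X_n). -/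
/-!
With `E(t) = ∏_{i ≤ n} (1 - X_i t)` and `H(t) = ∏_{i ≤ k+1} (1 - X_i t)⁻¹`, the coefficient of `t^j`
is `(-1)^j e_j` in `E` and `h_j` in `H`. The factors of `H` cancel against those of `E`, so
`E H = ∏_{k+1 < i ≤ n} (1 - X_i t)` has degree `n - k - 1`; its coefficient of `t^{n-k}`, which is
the alternating sum, therefore vanishes.
-/

open MvPolynomial

namespace PowerSeries

open Finset

variable {A : Type*}

theorem one_sub_C_mul_X_mul_mk_pow [CommRing A] (r : A) : (1 - C r * X) * mk (r ^ ·) = 1 := by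
  simpa [rescale_mk, rescale_X, mul_comm] using congrArg (rescale r) (mk_one_mul_one_sub_eq_one A)

theorem prod_one_sub_C_mul_X_mul_prod_mk_pow [CommRing A] {σ τ : Type*} [Fintype σ] [Fintype τ]
    [DecidableEq τ] (a : τ → A) {f : σ → τ} (hf : f.Injective) :
    (∏ i, (1 - C (a i) * X)) * ∏ i, mk (a (f i) ^ ·) =
      ∏ i ∈ univ \ univ.image f, (1 - C (a i) * X) := by
  rw [← prod_sdiff (subset_univ (univ.image f)), prod_image hf.injOn, mul_assoc,
    ← prod_mul_distrib]
  simp only [one_sub_C_mul_X_mul_mk_pow, prod_const_one, mul_one]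

theorem coeff_prod_one_sub_C_mul_X [CommRing A] {ι : Type*} (s : Finset ι) (a : ι → A) (d : ℕ) :
    coeff d (∏ i ∈ s, (1 - C (a i) * X)) = (-1) ^ d * ∑ t ∈ s.powersetCard d, ∏ i ∈ t, a i := by
  classical
  have hterm (t : Finset ι) :
      ∏ i ∈ t, -(C (a i) * X) = C ((-1) ^ #t * ∏ i ∈ t, a i) * X ^ #t := by
    simp [prod_mul_distrib, prod_neg, mul_comm, mul_left_comm]
  simp_rw [sub_eq_add_neg, prod_one_add, hterm, map_sum, coeff_C_mul_X_pow]
  rw [powersetCard_eq_filter, sum_filter, mul_sum]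
  refine sum_congr rfl fun t _ => ?_
  obtain rfl | h := eq_or_ne #t d
  · simp
  · simp [h, h.symm]

theorem coeff_prod_mk_pow [CommSemiring A] {σ : Type*} [Fintype σ] [DecidableEq σ] (a : σ → A)
    (d : ℕ) : coeff d (∏ i, mk fun j => a i ^ j) = ∑ s : Sym σ d, ((s : Multiset σ).map a).prod := by
  let e : univ.finsuppAntidiag d ≃ Sym σ d :=
    (Equiv.subtypeEquivRight fun l => by simp [mem_finsuppAntidiag, Finsupp.sum_fintype]).trans
      (Sym.equivNatSum σ d).symm
  rw [coeff_prod, ← sum_coe_sort, ← Fintype.sum_equiv e _ _ fun _ => rfl]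
  refine Fintype.sum_congr _ _ fun l => ?_
  simp only [coeff_mk, e, Equiv.trans_apply, Sym.coe_equivNatSum_symm_apply,
    Equiv.subtypeEquivRight_apply_coe]
  rw [Finsupp.toMultiset_map, Finsupp.prod_toMultiset,
    Finsupp.prod_mapDomain_index (fun _ => pow_zero _) (fun _ _ _ => pow_add _ _ _),
    Finsupp.prod_fintype _ _ fun _ => pow_zero _]

end PowerSeries

namespace MvPolynomial

open Finset

variable {σ τ R : Type*}

theorem coeff_prod_one_sub_C_X_mul_X_eq_esymm [Fintype τ] [CommRing R] (d : ℕ) :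
    PowerSeries.coeff d (∏ i : τ, (1 - PowerSeries.C (X i : MvPolynomial τ R) * PowerSeries.X)) =
      (-1) ^ d * esymm τ R d := by
  rw [PowerSeries.coeff_prod_one_sub_C_mul_X, esymm]

theorem coeff_prod_mk_X_comp_pow_eq_rename_hsymm [Fintype σ] [DecidableEq σ] [CommSemiring R]
    (f : σ → τ) (d : ℕ) :
    PowerSeries.coeff d (∏ i : σ, PowerSeries.mk fun j => (X (f i) : MvPolynomial τ R) ^ j) =
      rename f (hsymm σ R d) := by
  rw [PowerSeries.coeff_prod_mk_pow, hsymm, map_sum]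
  refine sum_congr rfl fun s _ => ?_
  simp only [← Multiset.prod_hom', rename_X]
  rfl

theorem sum_neg_one_pow_mul_esymm_mul_rename_hsymm [Fintype σ] [DecidableEq σ] [Fintype τ]
    [CommRing R] {f : σ → τ} (hf : f.Injective) {d : ℕ} (hd : Fintype.card τ < d + Fintype.card σ) :
    ∑ j ∈ range (d + 1), (-1) ^ j * esymm τ R j * rename f (hsymm σ R (d - j)) = 0 := by
  classical
  set E := ∏ i : τ, (1 - PowerSeries.C (X i : MvPolynomial τ R) * PowerSeries.X)
  set H := ∏ i : σ, PowerSeries.mk fun j => (X (f i) : MvPolynomial τ R) ^ j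
  have hcard : #(univ \ univ.image f) < d := by
    rw [card_sdiff_of_subset (subset_univ _), card_image_of_injective _ hf, card_univ, card_univ]
    have := Fintype.card_le_of_injective f hf
    omega
  calc ∑ j ∈ range (d + 1), (-1) ^ j * esymm τ R j * rename f (hsymm σ R (d - j))
      = ∑ j ∈ range (d + 1), PowerSeries.coeff j E * PowerSeries.coeff (d - j) H := by
        simp only [E, H, coeff_prod_one_sub_C_X_mul_X_eq_esymm,
          coeff_prod_mk_X_comp_pow_eq_rename_hsymm]
    _ = PowerSeries.coeff d (E * H) := by
        rw [PowerSeries.coeff_mul, Nat.sum_antidiagonal_eq_sum_range_succ_mk]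
    _ = 0 := by
        rw [PowerSeries.prod_one_sub_C_mul_X_mul_prod_mk_pow X hf,
          PowerSeries.coeff_prod_one_sub_C_mul_X, powersetCard_eq_empty.2 hcard, sum_empty,
          mul_zero]

end MvPolynomial

/-- For variables `X_1, …, X_n` and `0 ≤ k ≤ n-1`, let `e_i` be the `i`-th elementary
symmetric polynomial in all `n` variables and `h_j` the `j`-th complete homogeneous
symmetric polynomial in the first `k+1` variables.  Then
`h_{n-k} - e_1 h_{n-k-1} + e_2 h_{n-k-2} - ⋯ + (-1)^{n-k} e_{n-k} = 0`, i.e.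
`∑_{j=0}^{n-k} (-1)^j e_j h_{n-k-j} = 0`. -/
theorem esymm_hsymm_alternating_sum (n k : ℕ) (hkn : k + 1 ≤ n) :
    ∑ j ∈ Finset.range (n - k + 1),
        ((-1 : MvPolynomial (Fin n) ℤ) ^ j) * esymm (Fin n) ℤ j *
          rename (Fin.castLE hkn) (hsymm (Fin (k + 1)) ℤ (n - k - j)) = 0 :=
  sum_neg_one_pow_mul_esymm_mul_rename_hsymm (Fin.castLE_injective hkn) (by simp only [Fintype.card_fin]; omega)
end

section
/- Let C be a monoidal category and C̄ its idempotent (Karoubi) completion. Then for objects A, B of C, the natural map Hom_{C(S¹)}(A,B) → Hom_{C̄(S¹)}(A,B) between horizontal trace hom-spaces is a bijection; i.e., the induced functor C(S¹) → C̄(S¹) is fully faithful. -/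
open CategoryTheory MonoidalCategory

/-- The relation generating the equivalence on pairs `(Z, φ : A ⊗ Z ⟶ Z ⊗ B)` defining
the horizontal trace: for `α : Z ⟶ Z'` and `ψ : A ⊗ Z' ⟶ Z ⊗ B`, the pair
`(Z, (1 ⊗ α) ≫ ψ)` is related to `(Z', ψ ≫ (α ⊗ 1))`. -/
def HTRel (C : Type*) [Category C] [MonoidalCategory C] (A B : C) :
    (Σ Z : C, (A ⊗ Z ⟶ Z ⊗ B)) → (Σ Z : C, (A ⊗ Z ⟶ Z ⊗ B)) → Prop :=
  fun p q => ∃ (α : p.1 ⟶ q.1) (ψ : A ⊗ q.1 ⟶ p.1 ⊗ B),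
    p.2 = (A ◁ α) ≫ ψ ∧ q.2 = ψ ≫ (α ▷ B)

/-- The hom-space `Hom_{C(S¹)}(A, B)` of the horizontal trace of a monoidal category. -/
def HTHom (C : Type*) [Category C] [MonoidalCategory C] (A B : C) : Type _ :=
  Quot (HTRel C A B)

/-!
If `W` is a retract of `X` via `i, r`, then `(W, φ)` and `(X, (A ◁ r) ≫ φ ≫ (i ▷ B))` are
equivalent in the horizontal trace, and this conjugation carries the generating relation to itself.
Choosing for every object of `C̄` a retraction onto an object of `C` thus moves every pair of
`C̄(S¹)`, and every generating relation between pairs, into the image of `C`. A fully faithful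
monoidal functor reflects the relation between pairs in its image, so this defines an inverse
`C̄(S¹) → C(S¹)` of the induced map.
-/

abbrev HTPair (C : Type*) [Category C] [MonoidalCategory C] (A B : C) : Type _ :=
  Σ Z : C, (A ⊗ Z ⟶ Z ⊗ B)

namespace CategoryTheory.Retract

variable {C : Type*} [Category C] [MonoidalCategory C] {A B W X : C}

def conj (e : Retract W X) (φ : A ⊗ W ⟶ W ⊗ B) : A ⊗ X ⟶ X ⊗ B :=
  (A ◁ e.r) ≫ φ ≫ (e.i ▷ B)

theorem htRel_conj (e : Retract W X) (φ : A ⊗ W ⟶ W ⊗ B) :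
    HTRel C A B ⟨X, e.conj φ⟩ ⟨W, φ⟩ :=
  ⟨e.r, φ ≫ (e.i ▷ B), by simp [conj], by simp [← comp_whiskerRight]⟩

end CategoryTheory.Retract

namespace HTRel

variable {C : Type*} [Category C] [MonoidalCategory C] {A B W W' X X' : C}

theorem conj (e : Retract W X) (e' : Retract W' X') {φ : A ⊗ W ⟶ W ⊗ B}
    {φ' : A ⊗ W' ⟶ W' ⊗ B} (h : HTRel C A B ⟨W, φ⟩ ⟨W', φ'⟩) :
    HTRel C A B ⟨X, e.conj φ⟩ ⟨X', e'.conj φ'⟩ := by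
  obtain ⟨α, ψ, hφ, hφ'⟩ := h
  dsimp only at α ψ hφ hφ'
  subst hφ hφ'
  refine ⟨e.r ≫ α ≫ e'.i, (A ◁ e'.r) ≫ ψ ≫ (e.i ▷ B), ?_, ?_⟩
  · simp [Retract.conj, ← whiskerLeft_comp_assoc, -whiskerLeft_comp]
  · simp [Retract.conj, ← comp_whiskerRight]

end HTRel

namespace CategoryTheory.Functor

open LaxMonoidal OplaxMonoidal

variable {C D : Type*} [Category C] [Category D] [MonoidalCategory C] [MonoidalCategory D]
  (F : C ⥤ D) [F.Monoidal] {A B : C}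

def mapHTPair (p : HTPair C A B) : HTPair D (F.obj A) (F.obj B) :=
  ⟨F.obj p.1, μ F A p.1 ≫ F.map p.2 ≫ δ F p.1 B⟩

theorem htRel_mapHTPair {p q : HTPair C A B} (h : HTRel C A B p q) :
    HTRel D (F.obj A) (F.obj B) (F.mapHTPair p) (F.mapHTPair q) := by
  obtain ⟨α, ψ, hp, hq⟩ := h
  refine ⟨F.map α, μ F A q.1 ≫ F.map ψ ≫ δ F p.1 B, ?_, ?_⟩
  · simp [mapHTPair, hp]
  · simp [mapHTPair, hq]

theorem htRel_of_htRel_mapHTPair [F.Full] [F.Faithful] {p q : HTPair C A B}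
    (h : HTRel D (F.obj A) (F.obj B) (F.mapHTPair p) (F.mapHTPair q)) :
    HTRel C A B p q := by
  obtain ⟨(α : F.obj p.1 ⟶ F.obj q.1), (ψ : F.obj A ⊗ F.obj q.1 ⟶ F.obj p.1 ⊗ F.obj B), hp,
    hq⟩ := h
  dsimp only [mapHTPair] at hp hq
  refine ⟨F.preimage α, F.preimage (δ F A q.1 ≫ ψ ≫ μ F p.1 B), F.map_injective ?_,
    F.map_injective ?_⟩
  · rw [← cancel_epi (μ F A p.1), ← cancel_mono (δ F p.1 B), Category.assoc, hp]
    simp [Monoidal.map_whiskerLeft]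
  · rw [← cancel_epi (μ F A q.1), ← cancel_mono (δ F q.1 B), Category.assoc, hq]
    simp [Monoidal.map_whiskerRight]

noncomputable def liftHTPair [F.Full] (Z : C) (φ : F.obj A ⊗ F.obj Z ⟶ F.obj Z ⊗ F.obj B) :
    HTPair C A B :=
  ⟨Z, F.preimage (δ F A Z ≫ φ ≫ μ F Z B)⟩

@[simp]
theorem mapHTPair_liftHTPair [F.Full] (Z : C) (φ : F.obj A ⊗ F.obj Z ⟶ F.obj Z ⊗ F.obj B) :
    F.mapHTPair (F.liftHTPair Z φ) = ⟨F.obj Z, φ⟩ := by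
  simp [mapHTPair, liftHTPair]

end CategoryTheory.Functor

namespace HTHom

variable {C D : Type*} [Category C] [Category D] [MonoidalCategory C] [MonoidalCategory D]
  (F : C ⥤ D) [F.Monoidal] {A B : C}

def map : HTHom C A B → HTHom D (F.obj A) (F.obj B) :=
  Quot.lift (fun p => Quot.mk _ (F.mapHTPair p)) fun _ _ h => Quot.sound (F.htRel_mapHTPair h)

variable [F.Full] [F.Faithful] {c : D → C} (e : ∀ W, Retract W (F.obj (c W)))

noncomputable def liftOfRetracts : HTHom D (F.obj A) (F.obj B) → HTHom C A B :=
  Quot.lift (fun p => Quot.mk _ (F.liftHTPair (c p.1) ((e p.1).conj p.2))) fun p q h =>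
    Quot.sound (F.htRel_of_htRel_mapHTPair (by simpa using h.conj (e p.1) (e q.1)))

theorem liftOfRetracts_map :
    Function.LeftInverse (liftOfRetracts F e) (map F : HTHom C A B → _) := by
  rintro ⟨p⟩
  exact Quot.sound
    (F.htRel_of_htRel_mapHTPair (by simpa using (e _).htRel_conj (F.mapHTPair p).2))

theorem map_liftOfRetracts :
    Function.RightInverse (liftOfRetracts F e) (map F : HTHom C A B → _) := by
  rintro ⟨W, φ⟩
  exact Quot.sound (by simpa [map] using (e W).htRel_conj φ)

end HTHom

/-- Let `C` be a monoidal category and `C̄` its idempotent (Karoubi) completion, with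
(monoidal, fully faithful) inclusion `F : C ⥤ C̄`; every object of `C̄` is a retract of an
object coming from `C`.  Then for objects `A, B` of `C`, the natural map
`Hom_{C(S¹)}(A, B) → Hom_{C̄(S¹)}(F A, F B)` between horizontal trace hom-spaces,
sending the class of `(Z, φ)` to the class of `(F Z, μ ≫ F φ ≫ μ⁻¹)`, is a bijection;
i.e. the induced functor `C(S¹) → C̄(S¹)` is fully faithful. -/
theorem horizontal_trace_idempotent_completion_fully_faithful
    (C D : Type) [Category C] [Category D]
    [MonoidalCategory C] [MonoidalCategory D]
    (F : C ⥤ D) [F.Monoidal] [F.Full] [F.Faithful]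
    -- `D` is the idempotent completion of `C`: every object of `D` is a retract of an
    -- object in the image of `F`:
    (hretract : ∀ d : D, ∃ (c : C) (s : d ⟶ F.obj c) (π : F.obj c ⟶ d), s ≫ π = 𝟙 d)
    (A B : C) :
    ∃ g : HTHom C A B → HTHom D (F.obj A) (F.obj B),
      (∀ p : Σ Z : C, (A ⊗ Z ⟶ Z ⊗ B),
        g (Quot.mk (HTRel C A B) p)
          = Quot.mk (HTRel D (F.obj A) (F.obj B))
              ⟨F.obj p.1,
                Functor.LaxMonoidal.μ F A p.1 ≫ F.map p.2 ≫
                  Functor.OplaxMonoidal.δ F p.1 B⟩)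
      ∧ Function.Bijective g := by
  choose c i r hir using hretract
  let e W : Retract W (F.obj (c W)) := ⟨i W, r W, hir W⟩
  exact ⟨HTHom.map F, fun _ => rfl, Function.bijective_iff_has_inverse.2
    ⟨HTHom.liftOfRetracts F e, HTHom.liftOfRetracts_map F e, HTHom.map_liftOfRetracts F e⟩⟩
end
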